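/- Let Z be a nonempty finite set and let U_1, U_2 ⊆ C_Z be clopen subsets with U_1 ∩ U_2 ≠ ∅. Then the subgroup of the Higman–Thompson group V_Z generated by RiSt_{V_Z}(U_1) and RiSt_{V_Z}(U_2) equals RiSt_{V_Z}(U_1 ∪ U_2). -/

import Mathlib

noncomputable section

/-! ### Generalities: the group of self-homeomorphisms -/

instance homeoGroup {X : Type*} [TopologicalSpace X] : Group (X ≃ₜ X) where
  mul f g := g.trans f
  one := Homeomorph.refl X
  inv := Homeomorph.symm
  mul_assoc a b c := Homeomorph.ext fun _ => rfl
  one_mul a := Homeomorph.ext fun _ => rfl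
  mul_one a := Homeomorph.ext fun _ => rfl
  inv_mul_cancel a := Homeomorph.ext a.symm_apply_apply

/-! ### Homeomorphisms of a product with a discrete factor -/

theorem cont_fibered {X Y Z : Type*} [TopologicalSpace X] [TopologicalSpace Y]
    [DiscreteTopology Y] [TopologicalSpace Z] (f : X → Y → Z) (hf : ∀ y, Continuous (f · y)) :
    Continuous (fun p : X × Y => f p.1 p.2) := by
  rw [continuous_iff_continuousAt]
  rintro ⟨x, y⟩
  have hmem : {p : X × Y | p.2 = y} ∈ nhds (x, y) := by
    have ho : IsOpen {p : X × Y | p.2 = y} := by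
      have h : ({p : X × Y | p.2 = y}) = Prod.snd ⁻¹' {y} := rfl
      rw [h]; exact (isOpen_discrete _).preimage continuous_snd
    exact ho.mem_nhds rfl
  refine ContinuousAt.congr (((hf y).comp continuous_fst).continuousAt) ?_
  filter_upwards [hmem] with p hp
  simp [hp]

/-- The homeomorphism of `X × Y`, `Y` discrete, acting on each fiber `X × {y}`
by the homeomorphism `F y`. -/
def fiberedHomeo {X Y : Type*} [TopologicalSpace X] [TopologicalSpace Y] [DiscreteTopology Y]
    (F : Y → X ≃ₜ X) : (X × Y) ≃ₜ (X × Y) where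
  toEquiv := Equiv.prodCongrLeft fun y => (F y).toEquiv
  continuous_toFun := by
    refine Continuous.prodMk ?_ continuous_snd
    exact cont_fibered (fun x y => F y x) (fun y => (F y).continuous)
  continuous_invFun := by
    refine Continuous.prodMk ?_ continuous_snd
    exact cont_fibered (fun x y => (F y).symm x) (fun y => (F y).symm.continuous)

/-- The homeomorphism of `X × Y`, `Y` discrete, permuting the fibers according to a
permutation of `Y` and acting trivially in the `X`-coordinate. -/
def basePermHomeo {X Y : Type*} [TopologicalSpace X] [TopologicalSpace Y] [DiscreteTopology Y]
    (e : Equiv.Perm Y) : (X × Y) ≃ₜ (X × Y) where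
  toEquiv := Equiv.prodCongr (Equiv.refl X) e
  continuous_toFun :=
    continuous_fst.prodMk (continuous_of_discreteTopology.comp continuous_snd)
  continuous_invFun :=
    continuous_fst.prodMk (continuous_of_discreteTopology.comp continuous_snd)

/-! ### The Cantor set -/

/-- The Cantor set `{0,1}^ℕ`. -/
abbrev Cantor : Type := ℕ → Bool

/-- Prepending a finite word to an element of the Cantor set. -/
def wordAppend (w : List Bool) (ξ : Cantor) : Cantor :=
  fun n => if h : n < w.length then w[n] else ξ (n - w.length)

/-- A dyadic partition set: a finite set of binary words whose cylinders partition
the Cantor set. -/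
def IsDyadicPartition (A : Finset (List Bool)) : Prop :=
  ∀ ξ : Cantor, ∃! w : List Bool, w ∈ A ∧ ∃ ξ' : Cantor, wordAppend w ξ' = ξ

/-- The defining condition for elements of Thompson's group `V`: a homeomorphism of the
Cantor set given by prefix replacement along a bijection of two dyadic partition sets. -/
def IsThompsonVMap (γ : Cantor ≃ₜ Cantor) : Prop :=
  ∃ (A B : Finset (List Bool)) (f : List Bool → List Bool),
    IsDyadicPartition A ∧ IsDyadicPartition B ∧ A.card = B.card ∧ Set.BijOn f A B ∧
    ∀ w ∈ A, ∀ ξ : Cantor, γ (wordAppend w ξ) = wordAppend (f w) ξ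

/-- Thompson's group `V`, as a group of homeomorphisms of the Cantor set. -/
def ThompsonV : Subgroup (Cantor ≃ₜ Cantor) :=
  Subgroup.closure {γ | IsThompsonVMap γ}

/-! ### The Higman–Thompson groups `V_Z` and rigid stabilizers -/

/-- A dyadic partition set of `C_Z`, the disjoint union of copies of the Cantor set
indexed by `Z`. -/
def IsDyadicPartitionZ (Z : Type*) (A : Finset (List Bool × Z)) : Prop :=
  ∀ p : Cantor × Z, ∃! q : List Bool × Z,
    q ∈ A ∧ q.2 = p.2 ∧ ∃ ξ' : Cantor, wordAppend q.1 ξ' = p.1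

/-- The Higman–Thompson group `V_Z`, consisting of the homeomorphisms of `C_Z` given by
prefix replacement along a bijection of two dyadic partition sets of the same cardinality. -/
def HigmanThompsonV (Z : Type*) [TopologicalSpace Z] :
    Subgroup ((Cantor × Z) ≃ₜ (Cantor × Z)) :=
  Subgroup.closure {γ | ∃ (A B : Finset (List Bool × Z)) (f : List Bool × Z → List Bool × Z),
    IsDyadicPartitionZ Z A ∧ IsDyadicPartitionZ Z B ∧ A.card = B.card ∧
    Set.BijOn f A B ∧
    ∀ q ∈ A, ∀ ξ : Cantor, γ (wordAppend q.1 ξ, q.2) = (wordAppend (f q).1 ξ, (f q).2)}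

/-- The rigid stabilizer `RiSt_G(U)` of a subset `U` in a group `G` of homeomorphisms:
the subgroup of elements of `G` fixing the complement of `U` pointwise. -/
def rigidStabilizer {X : Type*} [TopologicalSpace X] (G : Subgroup (X ≃ₜ X)) (U : Set X) :
    Subgroup (X ≃ₜ X) where
  carrier := {γ | γ ∈ G ∧ ∀ x ∉ U, γ x = x}
  one_mem' := ⟨G.one_mem, fun _ _ => rfl⟩
  mul_mem' := by
    rintro a b ⟨haG, ha⟩ ⟨hbG, hb⟩
    refine ⟨G.mul_mem haG hbG, fun x hx => ?_⟩
    have h : (a * b) x = a (b x) := rfl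
    rw [h, hb x hx, ha x hx]
  inv_mem' := by
    rintro a ⟨haG, ha⟩
    refine ⟨G.inv_mem haG, fun x hx => ?_⟩
    have h : a⁻¹ (a x) = x := a.symm_apply_apply x
    rwa [ha x hx] at h

/-!
Write `Y = U₂ \ U₁` and let `γ ∈ RiSt(U₁ ∪ U₂)`. If some `b ∈ RiSt(U₂)` agrees with `γ` on `Y`,
then `b⁻¹γ ∈ RiSt(U₁)` and we are done. To reach this situation, pick `x₀ ∈ U₁ ∩ U₂` and a small
clopen `S ⊆ U₁ ∩ U₂` with `x₀ ∉ γ(S)`; take `α ∈ RiSt(U₂)` carrying `Y` onto `S` and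
`β ∈ RiSt(U₁)` carrying `γ(S) ∩ U₁` onto `S`. Then `βγα` maps `Y` into `U₂` without filling it,
so some `b ∈ RiSt(U₂)` agrees with `βγα` on `Y`.

The required elements of `V_Z` are built from tables: a clopen set is partitioned by finitely
many cylinders, whose number can be raised at will by splitting one of them, and an element of
`V_Z` acts by prefix replacement on every sufficiently small cylinder, by compactness.
-/

namespace HigmanThompson

open scoped Classical

theorem bijOn_piecewise_union {α β : Type*} {s s' : Set α} {t t' : Set β} {f g : α → β}
    [∀ x, Decidable (x ∈ s)] (hf : Set.BijOn f s t) (hg : Set.BijOn g s' t')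
    (hs : Disjoint s s') (ht : Disjoint t t') : Set.BijOn (s.piecewise f g) (s ∪ s') (t ∪ t') := by
  have h₁ : Set.BijOn (s.piecewise f g) s t :=
    hf.congr fun x hx => (Set.piecewise_eq_of_mem _ _ _ hx).symm
  have h₂ : Set.BijOn (s.piecewise f g) s' t' :=
    hg.congr fun x hx => (Set.piecewise_eq_of_notMem _ _ _ (hs.notMem_of_mem_right hx)).symm
  exact h₁.union h₂ ((Set.injOn_union hs).2 ⟨h₁.injOn, h₂.injOn,
    fun x hx y hy => ht.ne_of_mem (h₁.mapsTo hx) (h₂.mapsTo hy)⟩)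

theorem exists_bijOn_of_card_eq {α : Type*} {s t : Finset α} (h : s.card = t.card) :
    ∃ f : α → α, Set.BijOn f s t := by
  cases isEmpty_or_nonempty α
  · exact ⟨id, by simp [Set.eq_empty_of_isEmpty]⟩
  · exact s.finite_toSet.exists_bijOn_of_encard_eq (by simpa using h)

section RigidStabilizer

variable {X : Type*} [TopologicalSpace X] {G : Subgroup (X ≃ₜ X)}

theorem rigidStabilizer_mono (G : Subgroup (X ≃ₜ X)) {U V : Set X} (h : U ⊆ V) :
    rigidStabilizer G U ≤ rigidStabilizer G V :=
  fun _ ⟨hg, hfix⟩ => ⟨hg, fun x hx => hfix x fun hxU => hx (h hxU)⟩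

theorem mapsTo_of_mem_rigidStabilizer {U : Set X} {g : X ≃ₜ X}
    (hg : g ∈ rigidStabilizer G U) : Set.MapsTo g U U := fun x hx => by
  by_contra hgx
  exact hgx (by rwa [g.injective (hg.2 _ hgx)])

theorem mem_rigidStabilizer_of_eqOn_sdiff {U V : Set X} {g : X ≃ₜ X}
    (hg : g ∈ rigidStabilizer G V) (hfix : ∀ x ∈ V \ U, g x = x) : g ∈ rigidStabilizer G U :=
  ⟨hg.1, fun x hxU => by_cases (fun hxV : x ∈ V => hfix x ⟨hxV, hxU⟩) (hg.2 x)⟩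

theorem mem_sup_of_eqOn_sdiff {U₁ U₂ : Set X} {g h : X ≃ₜ X}
    (hg : g ∈ rigidStabilizer G (U₁ ∪ U₂)) (hh : h ∈ rigidStabilizer G U₂)
    (hgh : Set.EqOn h g (U₂ \ U₁)) : g ∈ rigidStabilizer G U₁ ⊔ rigidStabilizer G U₂ := by
  have hhg : h⁻¹ * g ∈ rigidStabilizer G U₁ :=
    mem_rigidStabilizer_of_eqOn_sdiff
      (mul_mem (inv_mem (rigidStabilizer_mono G Set.subset_union_right hh)) hg) fun x hx => by
        change h.symm (g x) = x
        rw [← hgh ⟨hx.1.resolve_left hx.2, hx.2⟩, h.symm_apply_apply]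
  simpa using mul_mem (Subgroup.mem_sup_right hh) (Subgroup.mem_sup_left hhg)

end RigidStabilizer

theorem wordAppend_append (w u : List Bool) (ξ : Cantor) :
    wordAppend (w ++ u) ξ = wordAppend w (wordAppend u ξ) := by
  funext n
  simp only [wordAppend, List.length_append]
  by_cases h₁ : n < w.length
  · rw [dif_pos (by omega), dif_pos h₁, List.getElem_append_left h₁]
  · by_cases h₂ : n < w.length + u.length
    · rw [dif_pos h₂, dif_neg h₁, dif_pos (by omega), List.getElem_append_right (by omega)]
    · rw [dif_neg h₂, dif_neg h₁, dif_neg (by omega), Nat.sub_add_eq]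

theorem wordAppend_apply_of_lt (w : List Bool) (ξ : Cantor) {n : ℕ} (h : n < w.length) :
    wordAppend w ξ n = w[n] := dif_pos h

theorem wordAppend_apply_add_length (w : List Bool) (ξ : Cantor) (k : ℕ) :
    wordAppend w ξ (k + w.length) = ξ k := by
  simp [wordAppend]

theorem continuous_wordAppend (w : List Bool) : Continuous (wordAppend w) := by
  refine continuous_pi fun n => ?_
  by_cases h : n < w.length
  · simp only [wordAppend, dif_pos h]
    exact continuous_const
  · simp only [wordAppend, dif_neg h]
    exact continuous_apply _

theorem wordAppend_ofFn_shift (ξ : Cantor) (n : ℕ) :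
    wordAppend (List.ofFn fun i : Fin n => ξ i) (fun k => ξ (k + n)) = ξ := by
  funext k
  by_cases h : k < n
  · simp [wordAppend, h]
  · simp [wordAppend, h, Nat.sub_add_cancel (Nat.le_of_not_lt h)]

variable {Z : Type*}

def cylinderMap (q : List Bool × Z) (ξ : Cantor) : Cantor × Z := (wordAppend q.1 ξ, q.2)

def cylinder (q : List Bool × Z) : Set (Cantor × Z) := Set.range (cylinderMap q)

def prefixWord (n : ℕ) (p : Cantor × Z) : List Bool × Z := (List.ofFn fun i : Fin n => p.1 i, p.2)

theorem cylinderMap_append (q : List Bool × Z) (u : List Bool) (ξ : Cantor) :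
    cylinderMap (q.1 ++ u, q.2) ξ = cylinderMap q (wordAppend u ξ) := by
  simp [cylinderMap, wordAppend_append]

theorem cylinder_append_subset (q : List Bool × Z) (u : List Bool) :
    cylinder (q.1 ++ u, q.2) ⊆ cylinder q := by
  rintro _ ⟨ξ, rfl⟩
  exact ⟨_, (cylinderMap_append q u ξ).symm⟩

theorem cylinder_nonempty (q : List Bool × Z) : (cylinder q).Nonempty :=
  Set.range_nonempty _

theorem mem_cylinder_iff {q : List Bool × Z} {p : Cantor × Z} :
    p ∈ cylinder q ↔ p.2 = q.2 ∧ ∀ i (hi : i < q.1.length), p.1 i = q.1[i] := by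
  constructor
  · rintro ⟨ξ, rfl⟩
    exact ⟨rfl, fun i hi => wordAppend_apply_of_lt _ _ hi⟩
  · rintro ⟨h₂, h₁⟩
    refine ⟨fun k => p.1 (k + q.1.length), Prod.ext (funext fun n => ?_) h₂.symm⟩
    change wordAppend q.1 (fun k => p.1 (k + q.1.length)) n = p.1 n
    by_cases hn : n < q.1.length
    · exact (wordAppend_apply_of_lt _ _ hn).trans (h₁ n hn).symm
    · simp [wordAppend, hn, Nat.sub_add_cancel (Nat.le_of_not_lt hn)]

theorem mem_cylinder_prefixWord (n : ℕ) (p : Cantor × Z) : p ∈ cylinder (prefixWord n p) :=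
  ⟨fun k => p.1 (k + n), Prod.ext (wordAppend_ofFn_shift p.1 n) rfl⟩

theorem eq_prefixWord_of_mem_cylinder {q : List Bool × Z} {p : Cantor × Z}
    (h : p ∈ cylinder q) : q = prefixWord q.1.length p := by
  rw [mem_cylinder_iff] at h
  exact Prod.ext (List.ext_getElem (by simp [prefixWord]) fun i h₁ _ => by
    simp [prefixWord, h.2 i h₁]) h.1.symm

theorem exists_append_of_mem_cylinder {q r : List Bool × Z} {p : Cantor × Z}
    (hq : p ∈ cylinder q) (hr : p ∈ cylinder r) (hle : q.1.length ≤ r.1.length) :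
    ∃ u, r = (q.1 ++ u, q.2) := by
  rw [mem_cylinder_iff] at hq hr
  have htake : q.1 = r.1.take q.1.length :=
    List.ext_getElem (by simp [hle]) fun i h₁ _ => by
      rw [List.getElem_take, ← hq.2 i h₁, hr.2 i (by omega)]
  refine ⟨r.1.drop q.1.length, Prod.ext ?_ (hr.1.symm.trans hq.1)⟩
  conv_lhs => rw [← List.take_append_drop q.1.length r.1]
  rw [← htake]

theorem mem_cylinder_prefixWord_iff {n : ℕ} {p x : Cantor × Z} :
    x ∈ cylinder (prefixWord n p) ↔ x.2 = p.2 ∧ x.1 ∈ PiNat.cylinder p.1 n := by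
  simp [mem_cylinder_iff, prefixWord, PiNat.mem_cylinder_iff]

theorem mem_cylinder_iff_exists {q : List Bool × Z} {p : Cantor × Z} :
    p ∈ cylinder q ↔ q.2 = p.2 ∧ ∃ ξ, wordAppend q.1 ξ = p.1 :=
  ⟨by rintro ⟨ξ, rfl⟩; exact ⟨rfl, ξ, rfl⟩, by rintro ⟨h₂, ξ, h₁⟩; exact ⟨ξ, Prod.ext h₁ h₂⟩⟩

theorem mem_cylinder_append_singleton_iff {q : List Bool × Z} {b : Bool} {p : Cantor × Z} :
    p ∈ cylinder (q.1 ++ [b], q.2) ↔ p ∈ cylinder q ∧ p.1 q.1.length = b := by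
  constructor
  · rintro ⟨ξ, rfl⟩
    rw [cylinderMap_append]
    refine ⟨⟨_, rfl⟩, ?_⟩
    simpa [cylinderMap, wordAppend_apply_of_lt] using
      wordAppend_apply_add_length q.1 (wordAppend [b] ξ) 0
  · rintro ⟨⟨ξ, rfl⟩, rfl⟩
    refine ⟨fun k => ξ (k + 1), ?_⟩
    rw [cylinderMap_append]
    congr 1
    have h := wordAppend_apply_add_length q.1 ξ 0
    rw [zero_add] at h
    simpa [cylinderMap, h] using wordAppend_ofFn_shift ξ 1

section Topology

variable [TopologicalSpace Z] [DiscreteTopology Z]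

theorem isClopen_cylinder (q : List Bool × Z) : IsClopen (cylinder q) := by
  have : cylinder q = Prod.snd ⁻¹' {q.2} ∩
      ⋂ i : Fin q.1.length, (fun p : Cantor × Z => p.1 i) ⁻¹' {q.1[(i : ℕ)]} := by
    ext p
    simp [mem_cylinder_iff, Fin.forall_iff]
  rw [this]
  exact ((isClopen_discrete _).preimage continuous_snd).inter <| isClopen_iInter_of_finite
    fun i => (isClopen_discrete _).preimage ((continuous_apply _).comp continuous_fst)

theorem exists_cylinder_prefixWord_subset {O : Set (Cantor × Z)} {p : Cantor × Z}
    (hO : O ∈ nhds p) : ∃ n, cylinder (prefixWord n p) ⊆ O := by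
  obtain ⟨_, ⟨_, ⟨x, n, rfl⟩, _, ⟨z, rfl⟩, rfl⟩, hp, hsub⟩ :=
    ((PiNat.isTopologicalBasis_cylinders fun _ => Bool).prod
      (isTopologicalBasis_singletons Z)).mem_nhds_iff.1 hO
  rw [Set.mem_prod, Set.mem_singleton_iff] at hp
  refine ⟨n, fun y hy => hsub ?_⟩
  rw [mem_cylinder_prefixWord_iff, hp.2, PiNat.mem_cylinder_iff_eq.1 hp.1] at hy
  exact ⟨hy.2, hy.1⟩

end Topology

section Compact

variable [TopologicalSpace Z] [DiscreteTopology Z] [Finite Z]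

/-- Finitely many of the given cylinders cover `C_Z` by compactness, and every word longer than
all of them extends one of them. -/
theorem exists_forall_le_length {Φ : List Bool × Z → Prop}
    (hext : ∀ q u, Φ q → Φ (q.1 ++ u, q.2)) (hloc : ∀ p, ∃ q, p ∈ cylinder q ∧ Φ q) :
    ∃ N, ∀ q : List Bool × Z, N ≤ q.1.length → Φ q := by
  choose w hw hΦ using hloc
  obtain ⟨t, ht⟩ := isCompact_univ.elim_finite_subcover (fun p => cylinder (w p))
    (fun p => (isClopen_cylinder _).isOpen) (fun p _ => Set.mem_iUnion.2 ⟨p, hw p⟩)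
  refine ⟨t.sup fun p => (w p).1.length, fun q hq => ?_⟩
  obtain ⟨p, hpt, hp⟩ := Set.mem_iUnion₂.1 (ht (Set.mem_univ (cylinderMap q fun _ => false)))
  obtain ⟨u, rfl⟩ := exists_append_of_mem_cylinder hp ⟨_, rfl⟩
    ((Finset.le_sup (f := fun p => (w p).1.length) hpt).trans hq)
  exact hext _ u (hΦ p)

theorem exists_forall_cylinder_subset_or_subset_compl {P : Set (Cantor × Z)} (hP : IsClopen P) :
    ∃ N, ∀ q : List Bool × Z, N ≤ q.1.length → cylinder q ⊆ P ∨ cylinder q ⊆ Pᶜ := by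
  refine exists_forall_le_length (fun q u h => ?_) fun p => ?_
  · exact h.imp (cylinder_append_subset q u).trans (cylinder_append_subset q u).trans
  · by_cases hp : p ∈ P
    · obtain ⟨n, hn⟩ := exists_cylinder_prefixWord_subset (hP.isOpen.mem_nhds hp)
      exact ⟨_, mem_cylinder_prefixWord n p, Or.inl hn⟩
    · obtain ⟨n, hn⟩ := exists_cylinder_prefixWord_subset (hP.compl.isOpen.mem_nhds hp)
      exact ⟨_, mem_cylinder_prefixWord n p, Or.inr hn⟩

end Compact

structure IsCylinderPartition (F : Finset (List Bool × Z)) (P : Set (Cantor × Z)) : Prop where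
  biUnion_eq : ⋃ q ∈ F, cylinder q = P
  pairwiseDisjoint : (F : Set (List Bool × Z)).PairwiseDisjoint cylinder

def children (q : List Bool × Z) : Finset (List Bool × Z) :=
  Finset.univ.image fun b => (q.1 ++ [b], q.2)

theorem isCylinderPartition_children (q : List Bool × Z) :
    IsCylinderPartition (children q) (cylinder q) where
  biUnion_eq := by
    ext p
    simp only [children, Finset.mem_image, Finset.mem_univ, true_and, Set.mem_iUnion,
      exists_prop, exists_exists_eq_and, mem_cylinder_append_singleton_iff]
    exact ⟨fun ⟨_, h, _⟩ => h, fun h => ⟨_, h, rfl⟩⟩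
  pairwiseDisjoint := by
    simp only [children, Finset.coe_image, Finset.coe_univ, Set.image_univ]
    rintro _ ⟨b, rfl⟩ _ ⟨b', rfl⟩ hne
    refine Set.disjoint_left.2 fun p hb hb' => hne ?_
    rw [mem_cylinder_append_singleton_iff] at hb hb'
    rw [← hb.2, hb'.2]

theorem card_children (q : List Bool × Z) : (children q).card = 2 :=
  Finset.card_image_of_injective _ fun b b' h => by simpa using h

namespace IsCylinderPartition

variable {F G : Finset (List Bool × Z)} {P Q : Set (Cantor × Z)}

theorem cylinder_subset (hF : IsCylinderPartition F P) {q : List Bool × Z} (hq : q ∈ F) :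
    cylinder q ⊆ P :=
  hF.biUnion_eq ▸ Set.subset_biUnion_of_mem (u := cylinder) (Finset.mem_coe.2 hq)

theorem exists_mem (hF : IsCylinderPartition F P) {p : Cantor × Z} (hp : p ∈ P) :
    ∃ q ∈ F, p ∈ cylinder q := by
  rw [← hF.biUnion_eq] at hp
  simpa using hp

theorem eq_of_mem (hF : IsCylinderPartition F P) {q r : List Bool × Z} {p : Cantor × Z}
    (hq : q ∈ F) (hr : r ∈ F) (hpq : p ∈ cylinder q) (hpr : p ∈ cylinder r) : q = r :=
  hF.pairwiseDisjoint.elim hq hr (Set.not_disjoint_iff.2 ⟨p, hpq, hpr⟩)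

theorem isDyadicPartitionZ {A : Finset (List Bool × Z)} (hA : IsCylinderPartition A Set.univ) :
    IsDyadicPartitionZ Z A := fun p => by
  obtain ⟨q, hq, hpq⟩ := hA.exists_mem (Set.mem_univ p)
  refine ⟨q, ⟨hq, mem_cylinder_iff_exists.1 hpq⟩, fun r ⟨hr, hpr⟩ => ?_⟩
  exact hA.eq_of_mem hr hq (mem_cylinder_iff_exists.2 hpr) hpq

theorem union (hF : IsCylinderPartition F P) (hG : IsCylinderPartition G Q)
    (hPQ : Disjoint P Q) : IsCylinderPartition (F ∪ G) (P ∪ Q) where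
  biUnion_eq := by rw [Finset.set_biUnion_union, hF.biUnion_eq, hG.biUnion_eq]
  pairwiseDisjoint := by
    rw [Finset.coe_union, Set.pairwiseDisjoint_union]
    exact ⟨hF.pairwiseDisjoint, hG.pairwiseDisjoint, fun q hq r hr _ =>
      hPQ.mono (hF.cylinder_subset hq) (hG.cylinder_subset hr)⟩

theorem disjoint (hF : IsCylinderPartition F P) (hG : IsCylinderPartition G Q)
    (hPQ : Disjoint P Q) : Disjoint F G :=
  Finset.disjoint_left.2 fun q hqF hqG =>
    ((Set.inter_self (cylinder q)).symm ▸ cylinder_nonempty q).not_disjoint (hPQ.mono (hF.cylinder_subset hqF) (hG.cylinder_subset hqG))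

theorem erase (hF : IsCylinderPartition F P) {q : List Bool × Z} (hq : q ∈ F) :
    IsCylinderPartition (F.erase q) (P \ cylinder q) where
  biUnion_eq := by
    ext p
    simp only [Finset.mem_erase, Set.mem_iUnion, exists_prop, Set.mem_sdiff]
    constructor
    · rintro ⟨r, ⟨hrq, hr⟩, hpr⟩
      exact ⟨hF.cylinder_subset hr hpr, fun hpq => hrq (hF.eq_of_mem hr hq hpr hpq)⟩
    · rintro ⟨hp, hpq⟩
      obtain ⟨r, hr, hpr⟩ := hF.exists_mem hp
      exact ⟨r, ⟨fun h => hpq (h ▸ hpr), hr⟩, hpr⟩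
  pairwiseDisjoint := hF.pairwiseDisjoint.subset (Finset.coe_subset.2 (Finset.erase_subset q F))

theorem split (hF : IsCylinderPartition F P) {q : List Bool × Z} (hq : q ∈ F) :
    IsCylinderPartition (F.erase q ∪ children q) P ∧ (F.erase q ∪ children q).card = F.card + 1 := by
  have hdisj : Disjoint (P \ cylinder q) (cylinder q) := Set.disjoint_sdiff_left
  have hpos : 0 < F.card := Finset.card_pos.2 ⟨q, hq⟩
  refine ⟨Set.sdiff_union_of_subset (hF.cylinder_subset hq) ▸
    (hF.erase hq).union (isCylinderPartition_children q) hdisj, ?_⟩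
  rw [Finset.card_union_of_disjoint ((hF.erase hq).disjoint (isCylinderPartition_children q) hdisj),
    Finset.card_erase_of_mem hq, card_children]
  omega

theorem exists_card_eq (hF : IsCylinderPartition F P) (hP : P.Nonempty) {m : ℕ}
    (hm : F.card ≤ m) : ∃ F', IsCylinderPartition F' P ∧ F'.card = m := by
  induction m, hm using Nat.le_induction with
  | base => exact ⟨F, hF, rfl⟩
  | succ m _ ih =>
    obtain ⟨F', hF', rfl⟩ := ih
    obtain ⟨q, hq, -⟩ := hF'.exists_mem hP.some_mem
    exact ⟨_, hF'.split hq⟩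

theorem image [TopologicalSpace Z] (hF : IsCylinderPartition F P)
    {g : (Cantor × Z) ≃ₜ (Cantor × Z)} {e : List Bool × Z → List Bool × Z}
    (he : ∀ q ∈ F, g '' cylinder q = cylinder (e q)) :
    Set.InjOn e F ∧ IsCylinderPartition (F.image e) (g '' P) := by
  have hdisj : ∀ q ∈ F, ∀ r ∈ F, q ≠ r → Disjoint (cylinder (e q)) (cylinder (e r)) :=
    fun q hq r hr hqr => he q hq ▸ he r hr ▸
      (Set.disjoint_image_iff g.injective).2 (hF.pairwiseDisjoint hq hr hqr)
  refine ⟨fun q hq r hr heq => ?_, ⟨?_, ?_⟩⟩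
  · by_contra hqr
    have := hdisj q hq r hr hqr
    rw [heq, disjoint_self, Set.bot_eq_empty] at this
    exact (cylinder_nonempty _).ne_empty this
  · rw [Finset.set_biUnion_finset_image, ← hF.biUnion_eq, Set.image_iUnion₂]
    exact Set.iUnion₂_congr fun q hq => (he q hq).symm
  · rw [Finset.coe_image]
    rintro _ ⟨q, hq, rfl⟩ _ ⟨r, hr, rfl⟩ hne
    exact hdisj q hq r hr fun h => hne (h ▸ rfl)

theorem union_compl (hF : IsCylinderPartition F P) (hG : IsCylinderPartition G Pᶜ) :
    IsCylinderPartition (F ∪ G) Set.univ :=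
  Set.union_compl_self P ▸ hF.union hG disjoint_compl_right

end IsCylinderPartition

section Clopen

variable [TopologicalSpace Z] [DiscreteTopology Z] [Finite Z]

theorem exists_isCylinderPartition {P : Set (Cantor × Z)} (hP : IsClopen P) (N : ℕ) :
    ∃ F, IsCylinderPartition F P ∧ ∀ q ∈ F, N ≤ q.1.length := by
  have := Fintype.ofFinite Z
  obtain ⟨N₀, hN₀⟩ := exists_forall_cylinder_subset_or_subset_compl hP
  set n := max N N₀
  set L := (Finset.univ : Finset ((Fin n → Bool) × Z)).image fun x => (List.ofFn x.1, x.2)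
  have hlen : ∀ q ∈ L, q.1.length = n := by
    simp only [L, Finset.mem_image]
    rintro _ ⟨x, -, rfl⟩
    exact List.length_ofFn
  have hprefix : ∀ p, prefixWord n p ∈ L :=
    fun p => Finset.mem_image.2 ⟨(fun i => p.1 i, p.2), Finset.mem_univ _, rfl⟩
  refine ⟨L.filter (cylinder · ⊆ P), ⟨?_, ?_⟩, fun q hq => ?_⟩
  · ext p
    simp only [Finset.mem_filter, Set.mem_iUnion, exists_prop]
    refine ⟨fun ⟨_, ⟨_, hqP⟩, hpq⟩ => hqP hpq,
      fun hp => ⟨_, ⟨hprefix p, ?_⟩, mem_cylinder_prefixWord n p⟩⟩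
    refine (hN₀ _ ?_).resolve_right fun h => h (mem_cylinder_prefixWord n p) hp
    rw [hlen _ (hprefix p)]
    exact le_max_right _ _
  · intro q hq r hr hne
    rw [Finset.coe_filter] at hq hr
    refine Set.disjoint_left.2 fun p hpq hpr => hne ?_
    rw [eq_prefixWord_of_mem_cylinder hpq, eq_prefixWord_of_mem_cylinder hpr, hlen q hq.1,
      hlen r hr.1]
  · rw [hlen q (Finset.mem_filter.1 hq).1]
    exact le_max_left _ _

theorem exists_isCylinderPartition_card_eq {P Q : Set (Cantor × Z)} (hP : IsClopen P)
    (hQ : IsClopen Q) (hPne : P.Nonempty) (hQne : Q.Nonempty) :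
    ∃ F G, IsCylinderPartition F P ∧ IsCylinderPartition G Q ∧ F.card = G.card := by
  obtain ⟨F, hF, -⟩ := exists_isCylinderPartition hP 0
  obtain ⟨G, hG, -⟩ := exists_isCylinderPartition hQ 0
  obtain ⟨F', hF', hF'card⟩ := hF.exists_card_eq hPne (le_max_left F.card G.card)
  obtain ⟨G', hG', hG'card⟩ := hG.exists_card_eq hQne (le_max_right F.card G.card)
  exact ⟨F', G', hF', hG', hF'card.trans hG'card.symm⟩

end Clopen

section Table

def tableMap (A : Finset (List Bool × Z)) (f : List Bool × Z → List Bool × Z)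
    (p : Cantor × Z) : Cantor × Z :=
  if h : ∃ q ∈ A, p ∈ cylinder q then
    cylinderMap (f h.choose) fun k => p.1 (k + h.choose.1.length)
  else p

variable {A B : Finset (List Bool × Z)} {f : List Bool × Z → List Bool × Z}

theorem tableMap_cylinderMap (hA : IsCylinderPartition A Set.univ) {q : List Bool × Z}
    (hq : q ∈ A) (ξ : Cantor) : tableMap A f (cylinderMap q ξ) = cylinderMap (f q) ξ := by
  have h : ∃ r ∈ A, cylinderMap q ξ ∈ cylinder r := ⟨q, hq, ξ, rfl⟩
  rw [tableMap, dif_pos h, hA.eq_of_mem h.choose_spec.1 hq h.choose_spec.2 ⟨ξ, rfl⟩]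
  exact congrArg _ (funext (wordAppend_apply_add_length q.1 ξ))

variable [TopologicalSpace Z] [DiscreteTopology Z]

theorem continuous_tableMap (hA : IsCylinderPartition A Set.univ) :
    Continuous (tableMap A f) := by
  refine continuous_iff_continuousAt.2 fun p => ?_
  obtain ⟨q, hq, hpq⟩ := hA.exists_mem (Set.mem_univ p)
  have hcont : Continuous fun x : Cantor × Z => cylinderMap (f q) fun k => x.1 (k + q.1.length) :=
    ((continuous_wordAppend _).comp
      (continuous_pi fun k => (continuous_apply _).comp continuous_fst)).prodMk continuous_const
  refine hcont.continuousAt.congr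
    (Filter.mem_of_superset ((isClopen_cylinder q).isOpen.mem_nhds hpq) ?_)
  rintro _ ⟨ξ, rfl⟩
  rw [Set.mem_ofPred_eq, tableMap_cylinderMap hA hq]
  exact congrArg _ (funext (wordAppend_apply_add_length q.1 ξ))

def tableHomeo [Nonempty Z] (hA : IsCylinderPartition A Set.univ) (hB : IsCylinderPartition B Set.univ)
    (hf : Set.BijOn f A B) : (Cantor × Z) ≃ₜ (Cantor × Z) where
  toFun := tableMap A f
  invFun := tableMap B (Function.invFunOn f A)
  left_inv p := by
    obtain ⟨q, hq, ξ, rfl⟩ := hA.exists_mem (Set.mem_univ p)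
    rw [tableMap_cylinderMap hA hq, tableMap_cylinderMap hB (hf.mapsTo hq),
      hf.injOn.leftInvOn_invFunOn hq]
  right_inv p := by
    obtain ⟨q, hq, ξ, rfl⟩ := hB.exists_mem (Set.mem_univ p)
    rw [tableMap_cylinderMap hB hq, tableMap_cylinderMap hA (hf.surjOn.mapsTo_invFunOn hq),
      hf.surjOn.rightInvOn_invFunOn hq]
  continuous_toFun := continuous_tableMap hA
  continuous_invFun := continuous_tableMap hB

theorem exists_mem_higmanThompsonV (hA : IsCylinderPartition A Set.univ)
    (hB : IsCylinderPartition B Set.univ) (hf : Set.BijOn f A B) :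
    ∃ g ∈ HigmanThompsonV Z, ∀ q ∈ A, ∀ ξ, g (cylinderMap q ξ) = cylinderMap (f q) ξ := by
  cases isEmpty_or_nonempty Z
  · exact ⟨1, one_mem _, fun q => isEmptyElim q.2⟩
  · exact ⟨tableHomeo hA hB hf, Subgroup.subset_closure ⟨A, B, f, hA.isDyadicPartitionZ,
      hB.isDyadicPartitionZ, hf.finsetCard_eq, hf, fun _ hq => tableMap_cylinderMap hA hq⟩,
      fun _ hq => tableMap_cylinderMap hA hq⟩

end Table

section PrefixReplacement

variable [TopologicalSpace Z]

def IsPrefixReplacementOn (g : (Cantor × Z) ≃ₜ (Cantor × Z)) (q : List Bool × Z) : Prop :=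
  ∃ r, ∀ ξ, g (cylinderMap q ξ) = cylinderMap r ξ

theorem IsPrefixReplacementOn.append {g : (Cantor × Z) ≃ₜ (Cantor × Z)} {q : List Bool × Z}
    (h : IsPrefixReplacementOn g q) (u : List Bool) : IsPrefixReplacementOn g (q.1 ++ u, q.2) := by
  obtain ⟨r, hr⟩ := h
  exact ⟨(r.1 ++ u, r.2), fun ξ => by rw [cylinderMap_append, hr, ← cylinderMap_append]⟩

theorem image_cylinder_eq {g : (Cantor × Z) ≃ₜ (Cantor × Z)} {q r : List Bool × Z}
    (h : ∀ ξ, g (cylinderMap q ξ) = cylinderMap r ξ) : g '' cylinder q = cylinder r := by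
  rw [cylinder, ← Set.range_comp]
  exact congrArg Set.range (funext h)

variable (Z) in
def locallyPrefixReplacement : Subgroup ((Cantor × Z) ≃ₜ (Cantor × Z)) where
  carrier := {g | ∀ p, ∃ q, p ∈ cylinder q ∧ IsPrefixReplacementOn g q}
  one_mem' p := ⟨prefixWord 0 p, mem_cylinder_prefixWord 0 p, _, fun _ => rfl⟩
  mul_mem' {g h} hg hh p := by
    obtain ⟨q, ⟨ξ, rfl⟩, q', hq'⟩ := hh p
    obtain ⟨r, hr, hgr⟩ := hg (h (cylinderMap q ξ))
    rw [hq'] at hr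
    -- refine `q` so that its image under `h` is at least as long as `r`
    set u := List.ofFn fun i : Fin r.1.length => ξ i
    have hξ : cylinderMap q ξ = cylinderMap (q.1 ++ u, q.2) fun k => ξ (k + r.1.length) := by
      rw [cylinderMap_append, wordAppend_ofFn_shift]
    have hq'ξ : cylinderMap q' ξ ∈ cylinder (q'.1 ++ u, q'.2) :=
      ⟨_, by rw [cylinderMap_append, wordAppend_ofFn_shift]⟩
    obtain ⟨v, hv⟩ := exists_append_of_mem_cylinder hr hq'ξ (by simp [u])
    obtain ⟨s, hs⟩ := hgr.append v
    refine ⟨(q.1 ++ u, q.2), ⟨_, hξ.symm⟩, s, fun η => ?_⟩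
    change g (h _) = _
    rw [cylinderMap_append, hq', ← cylinderMap_append, hv, hs]
  inv_mem' {g} hg p := by
    obtain ⟨q, ⟨ξ, hξ⟩, q', hq'⟩ := hg (g⁻¹ p)
    refine ⟨q', ⟨ξ, ?_⟩, q, fun η => ?_⟩
    · rw [← hq', hξ]
      exact g.apply_symm_apply p
    · rw [← hq']
      exact g.symm_apply_apply _

theorem higmanThompsonV_le_locallyPrefixReplacement :
    HigmanThompsonV Z ≤ locallyPrefixReplacement Z :=
  (Subgroup.closure_le _).2 fun g ⟨A, _, f, hA, _, _, _, hg⟩ p => by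
    obtain ⟨q, ⟨hq, hpq⟩, -⟩ := hA p
    exact ⟨q, mem_cylinder_iff_exists.2 hpq, f q, hg q hq⟩

theorem exists_forall_isPrefixReplacementOn [DiscreteTopology Z] [Finite Z]
    {g : (Cantor × Z) ≃ₜ (Cantor × Z)} (hg : g ∈ HigmanThompsonV Z) :
    ∃ N, ∀ q : List Bool × Z, N ≤ q.1.length → IsPrefixReplacementOn g q :=
  exists_forall_le_length (fun _ u h => h.append u) (higmanThompsonV_le_locallyPrefixReplacement hg)

end PrefixReplacement

section Construction

variable [TopologicalSpace Z] [DiscreteTopology Z] [Finite Z]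

theorem exists_mem_rigidStabilizer_of_bijOn {U D E : Set (Cantor × Z)} (hU : IsClopen U)
    (hD : IsClopen D) (hE : IsClopen E) (hDU : D ⊆ U) (hEU : E ⊆ U) (hUD : (U \ D).Nonempty)
    (hUE : (U \ E).Nonempty) {F G : Finset (List Bool × Z)} {e : List Bool × Z → List Bool × Z}
    (hF : IsCylinderPartition F D) (hG : IsCylinderPartition G E) (he : Set.BijOn e F G) :
    ∃ h ∈ rigidStabilizer (HigmanThompsonV Z) U,
      ∀ q ∈ F, ∀ ξ, h (cylinderMap q ξ) = cylinderMap (e q) ξ := by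
  -- The table of `h`: `e` on the cylinders of `D`, a bijection between equally large cylinder
  -- partitions of `U \ D` and `U \ E`, and the identity on a cylinder partition of `Uᶜ`.
  obtain ⟨F', G', hF', hG', hcard⟩ :=
    exists_isCylinderPartition_card_eq (hU.diff hD) (hU.diff hE) hUD hUE
  obtain ⟨e', he'⟩ := exists_bijOn_of_card_eq hcard
  obtain ⟨H, hH, -⟩ := exists_isCylinderPartition hU.compl 0
  have hcompl : ∀ {S : Set (Cantor × Z)}, S ⊆ U → U \ S ∪ Uᶜ = Sᶜ := fun hS => by
    ext x
    have := @hS x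
    by_cases hx : x ∈ U <;> simp [hx]
    tauto
  have hdisj : ∀ S : Set (Cantor × Z), Disjoint (U \ S) Uᶜ :=
    fun S => disjoint_compl_right.mono_left Set.sdiff_subset
  have hFc := hcompl hDU ▸ hF'.union hH (hdisj D)
  have hGc := hcompl hEU ▸ hG'.union hH (hdisj E)
  have hFF' := hF.disjoint hFc disjoint_compl_right
  have hF'H := hF'.disjoint hH (hdisj D)
  obtain ⟨h, hV, hh⟩ := exists_mem_higmanThompsonV (hF.union_compl hFc) (hG.union_compl hGc)
    (f := (F : Set _).piecewise e ((F' : Set _).piecewise e' id)) (by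
      simp only [Finset.coe_union]
      refine bijOn_piecewise_union he (bijOn_piecewise_union he' (Set.bijOn_id _)
        (Finset.disjoint_coe.2 hF'H) (Finset.disjoint_coe.2 (hG'.disjoint hH (hdisj E))))
        ?_ ?_ <;> rw [← Finset.coe_union, Finset.disjoint_coe]
      exacts [hFF', hG.disjoint hGc disjoint_compl_right])
  refine ⟨h, ⟨hV, fun x hx => ?_⟩, fun q hq ξ => ?_⟩
  · obtain ⟨q, hq, ξ, rfl⟩ := hH.exists_mem hx
    have hqF' : q ∈ F' ∪ H := Finset.mem_union_right _ hq
    rw [hh q (Finset.mem_union_right _ hqF'),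
      Set.piecewise_eq_of_notMem _ _ _ (Finset.disjoint_right.1 hFF' hqF'),
      Set.piecewise_eq_of_notMem _ _ _ (Finset.disjoint_right.1 hF'H hq), id]
  · rw [hh q (Finset.mem_union_left _ hq), Set.piecewise_eq_of_mem _ _ _ hq]

theorem exists_mem_rigidStabilizer_image_eq {U P Q : Set (Cantor × Z)} (hU : IsClopen U)
    (hP : IsClopen P) (hQ : IsClopen Q) (hPU : P ⊆ U) (hQU : Q ⊆ U) (hPne : P.Nonempty)
    (hQne : Q.Nonempty) (hUP : (U \ P).Nonempty) (hUQ : (U \ Q).Nonempty) :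
    ∃ g ∈ rigidStabilizer (HigmanThompsonV Z) U, g '' P = Q := by
  obtain ⟨F, G, hF, hG, hcard⟩ := exists_isCylinderPartition_card_eq hP hQ hPne hQne
  obtain ⟨e, he⟩ := exists_bijOn_of_card_eq hcard
  obtain ⟨g, hg, hge⟩ := exists_mem_rigidStabilizer_of_bijOn hU hP hQ hPU hQU hUP hUQ hF hG he
  have himage : F.image e = G := Finset.coe_injective (by rw [Finset.coe_image, he.image_eq])
  refine ⟨g, hg, ?_⟩
  rw [← (hF.image fun q hq => image_cylinder_eq (hge q hq)).2.biUnion_eq, himage, hG.biUnion_eq]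

theorem exists_mem_rigidStabilizer_eqOn {g : (Cantor × Z) ≃ₜ (Cantor × Z)}
    (hg : g ∈ HigmanThompsonV Z) {U D : Set (Cantor × Z)} (hU : IsClopen U) (hD : IsClopen D)
    (hDU : D ⊆ U) (hgD : g '' D ⊆ U) (hUD : (U \ D).Nonempty) (hUgD : (U \ g '' D).Nonempty) :
    ∃ h ∈ rigidStabilizer (HigmanThompsonV Z) U, Set.EqOn h g D := by
  obtain ⟨N, hN⟩ := exists_forall_isPrefixReplacementOn hg
  obtain ⟨F, hF, hFN⟩ := exists_isCylinderPartition hD N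
  choose! e he using hN
  obtain ⟨hinj, hFe⟩ := hF.image fun q hq => image_cylinder_eq (he q (hFN q hq))
  obtain ⟨h, hh, hhe⟩ := exists_mem_rigidStabilizer_of_bijOn hU hD
    ⟨g.isClosed_image.2 hD.1, g.isOpen_image.2 hD.2⟩ hDU hgD hUD hUgD hF hFe
    (by rw [Finset.coe_image]; exact hinj.bijOn_image)
  refine ⟨h, hh, fun x hx => ?_⟩
  obtain ⟨q, hq, ξ, rfl⟩ := hF.exists_mem hx
  rw [hhe q hq, he q (hFN q hq)]

theorem exists_isClopen_subset_notMem {W : Set (Cantor × Z)} (hW : IsClopen W)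
    (hne : W.Nonempty) (y : Cantor × Z) :
    ∃ S, IsClopen S ∧ S.Nonempty ∧ S ⊆ W ∧ y ∉ S ∧ (W \ S).Nonempty := by
  obtain ⟨F, hF, -⟩ := exists_isCylinderPartition hW 0
  obtain ⟨q, hq, -⟩ := hF.exists_mem hne.some_mem
  have hsub : ∀ b : Bool, cylinder (q.1 ++ [b], q.2) ⊆ W :=
    fun b => (cylinder_append_subset q [b]).trans (hF.cylinder_subset hq)
  have hmem : ∀ {b : Bool} {x}, x ∈ cylinder (q.1 ++ [b], q.2) → x.1 q.1.length = b :=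
    fun hx => (mem_cylinder_append_singleton_iff.1 hx).2
  obtain ⟨x, hx⟩ := cylinder_nonempty (q.1 ++ [y.1 q.1.length], q.2)
  refine ⟨_, isClopen_cylinder _, cylinder_nonempty _, hsub (!y.1 q.1.length),
    fun hy => ?_, x, hsub _ hx, fun hx' => ?_⟩
  · simpa using hmem hy
  · simpa [hmem hx] using hmem hx'

theorem exists_mem_rigidStabilizer_image_subset {U₁ U₂ S T : Set (Cantor × Z)}
    (h₁ : IsClopen U₁) (hS : IsClopen S) (hSne : S.Nonempty) (hSW : S ⊆ U₁ ∩ U₂)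
    (hWS : ((U₁ ∩ U₂) \ S).Nonempty) (hT : IsClopen T) (hTU : T ⊆ U₁ ∪ U₂)
    (hU₁T : (U₁ \ T).Nonempty) :
    ∃ β ∈ rigidStabilizer (HigmanThompsonV Z) U₁, β '' T ⊆ U₂ ∧ (U₂ \ β '' T).Nonempty := by
  obtain ⟨x, ⟨hx₁, hx₂⟩, hxS⟩ := hWS
  by_cases hTU₁ : (T ∩ U₁).Nonempty
  · obtain ⟨β, hβ, hβT⟩ := exists_mem_rigidStabilizer_image_eq h₁ (hT.inter h₁) hS
      Set.inter_subset_right (hSW.trans Set.inter_subset_left) hTU₁ hSne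
      (hU₁T.mono (Set.sdiff_subset_sdiff_right Set.inter_subset_left)) ⟨x, hx₁, hxS⟩
    have himage : β '' T = S ∪ T \ U₁ := by
      conv_lhs => rw [← Set.inter_union_sdiff T U₁]
      rw [Set.image_union, hβT, Set.EqOn.image_eq_self fun y hy => hβ.2 y hy.2]
    refine ⟨β, hβ, himage ▸ Set.union_subset (hSW.trans Set.inter_subset_right)
      fun y hy => (hTU hy.1).resolve_left hy.2, x, hx₂, ?_⟩
    rw [himage]
    rintro (h | h)
    exacts [hxS h, h.2 hx₁]
  · have h1 : (1 : (Cantor × Z) ≃ₜ (Cantor × Z)) '' T = T := Set.EqOn.image_eq_self fun _ _ => rfl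
    refine ⟨1, one_mem _, ?_⟩
    rw [h1]
    exact ⟨fun y hy => (hTU hy).resolve_left fun hy₁ => hTU₁ ⟨y, hy, hy₁⟩,
      x, hx₂, fun hxT => hTU₁ ⟨x, hxT, hx₁⟩⟩

theorem mem_sup_of_mem_rigidStabilizer_union {U₁ U₂ : Set (Cantor × Z)} (h₁ : IsClopen U₁)
    (h₂ : IsClopen U₂) (hne : (U₁ ∩ U₂).Nonempty) {γ : (Cantor × Z) ≃ₜ (Cantor × Z)}
    (hγ : γ ∈ rigidStabilizer (HigmanThompsonV Z) (U₁ ∪ U₂)) :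
    γ ∈ rigidStabilizer (HigmanThompsonV Z) U₁ ⊔ rigidStabilizer (HigmanThompsonV Z) U₂ := by
  obtain ⟨x₀, hx₀⟩ := hne
  have hx₀Y : x₀ ∈ U₂ \ (U₂ \ U₁) := ⟨hx₀.2, fun h => h.2 hx₀.1⟩
  by_cases hY : (U₂ \ U₁).Nonempty
  swap
  · exact mem_sup_of_eqOn_sdiff hγ (one_mem _) fun x hx => absurd ⟨x, hx⟩ hY
  obtain ⟨S, hS, hSne, hSW, hγS, hWS⟩ :=
    exists_isClopen_subset_notMem (h₁.inter h₂) ⟨x₀, hx₀⟩ (γ⁻¹ x₀)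
  obtain ⟨α, hα, hαY⟩ := exists_mem_rigidStabilizer_image_eq h₂ (h₂.diff h₁) hS
    Set.sdiff_subset (hSW.trans Set.inter_subset_right) hY hSne ⟨x₀, hx₀Y⟩
    (hWS.mono (Set.sdiff_subset_sdiff_left Set.inter_subset_right))
  obtain ⟨β, hβ, hβT, hβT'⟩ := exists_mem_rigidStabilizer_image_subset h₁ hS hSne hSW hWS
    ⟨γ.isClosed_image.2 hS.1, γ.isOpen_image.2 hS.2⟩
    ((Set.image_mono (hSW.trans (Set.inter_subset_left.trans Set.subset_union_left))).trans
      (mapsTo_of_mem_rigidStabilizer hγ).image_subset)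
    ⟨x₀, hx₀.1, fun ⟨y, hy, hyx⟩ => hγS (by rw [← hyx]; exact (γ.symm_apply_apply y).symm ▸ hy)⟩
  have hγ₃ : β * γ * α ∈ rigidStabilizer (HigmanThompsonV Z) (U₁ ∪ U₂) :=
    mul_mem (mul_mem (rigidStabilizer_mono _ Set.subset_union_left hβ) hγ)
      (rigidStabilizer_mono _ Set.subset_union_right hα)
  have hγ₃Y : (β * γ * α) '' (U₂ \ U₁) = β '' (γ '' S) := by
    rw [← hαY, Set.image_image, Set.image_image]
    rfl
  obtain ⟨b, hb, hbY⟩ := exists_mem_rigidStabilizer_eqOn hγ₃.1 h₂ (h₂.diff h₁) Set.sdiff_subset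
    (hγ₃Y ▸ hβT) ⟨x₀, hx₀Y⟩ (hγ₃Y ▸ hβT')
  have hγ_eq : γ = β⁻¹ * (β * γ * α) * α⁻¹ := by group
  rw [hγ_eq]
  exact mul_mem (mul_mem (inv_mem (Subgroup.mem_sup_left hβ)) (mem_sup_of_eqOn_sdiff hγ₃ hb hbY))
    (inv_mem (Subgroup.mem_sup_right hα))

end Construction

end HigmanThompson

theorem rigidStabilizer_union_general (Z : Type*) [Fintype Z] [TopologicalSpace Z]
    [DiscreteTopology Z] (U₁ U₂ : Set (Cantor × Z))
    (h₁ : IsClopen U₁) (h₂ : IsClopen U₂) (hne : (U₁ ∩ U₂).Nonempty) :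
    rigidStabilizer (HigmanThompsonV Z) U₁ ⊔ rigidStabilizer (HigmanThompsonV Z) U₂ =
      rigidStabilizer (HigmanThompsonV Z) (U₁ ∪ U₂) :=
  le_antisymm
    (sup_le (HigmanThompson.rigidStabilizer_mono _ Set.subset_union_left)
      (HigmanThompson.rigidStabilizer_mono _ Set.subset_union_right))
    fun _ hγ => HigmanThompson.mem_sup_of_mem_rigidStabilizer_union h₁ h₂ hne hγ

/-- For clopen subsets `U₁, U₂ ⊆ C_Z` with `U₁ ∩ U₂ ≠ ∅`, the subgroup generated by
`RiSt_{V_Z}(U₁)` and `RiSt_{V_Z}(U₂)` is `RiSt_{V_Z}(U₁ ∪ U₂)`. -/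
theorem rigidStabilizer_union (Z : Type*) [Fintype Z] [Nonempty Z] [TopologicalSpace Z]
    [DiscreteTopology Z] (U₁ U₂ : Set (Cantor × Z))
    (h₁ : IsClopen U₁) (h₂ : IsClopen U₂) (hne : (U₁ ∩ U₂).Nonempty) :
    rigidStabilizer (HigmanThompsonV Z) U₁ ⊔ rigidStabilizer (HigmanThompsonV Z) U₂ =
      rigidStabilizer (HigmanThompsonV Z) (U₁ ∪ U₂) :=
  rigidStabilizer_union_general Z U₁ U₂ h₁ h₂ hne

end
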